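/- Let G be a complex adjoint reductive group with Weyl group W, coweight lattice Λ, dual torus Ť = Spec k[Λ]. The fiber product Ť ×_{Ť//W} Ť (i.e. Spec(R ⊗_{R^W} R) with R = k[Λ]) is reduced, and equals the union of the graphs Γ_w ⊂ Ť × Ť of the Weyl group elements w ∈ W with the reduced induced scheme structure. -/

import Mathlib

/-!
Choose a basis `(e i)` of `R` over `R^W`. The map `R ⊗_{R^W} R → ∏_W R`, `f ⊗ g ↦ (w • f * g)_w`,
sends `∑ e i ⊗ r i` to `∑ r i • (w • e i)_w`, so it is injective as soon as the orbit vectors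
`(w • e i)_w` are linearly independent over `R`. Clearing denominators by `W`-invariant elements,
the `e i` stay linearly independent over the fixed field `Frac(R)^W`, and Artin's lemma on the
independence of characters then makes their orbit vectors independent over `Frac(R)`.
Injectivity gives reducedness (`∏_W R` is reduced, `R = k[Λ]` being a domain) and the equality
of kernels, since `μ` factors through `π`.
-/

open scoped TensorProduct
open AddMonoidAlgebra

/-- The subalgebra of invariants of a group acting by algebra automorphisms. -/
def invariantsSubalgebra {k A W : Type} [CommSemiring k] [Semiring A] [Algebra k A] [Monoid W]
    (σ : W →* (A ≃ₐ[k] A)) : Subalgebra k A where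
  carrier := {f | ∀ w, σ w f = f}
  mul_mem' := fun ha hb w => by rw [map_mul, ha w, hb w]
  add_mem' := fun ha hb w => by rw [map_add, ha w, hb w]
  algebraMap_mem' := fun r w => (σ w).commutes r

section Artin

variable {G F ι : Type*} [Group G] [Field F] [MulSemiringAction G F]

theorem FixedPoints.linearIndependent_toFun_comp {v : ι → F}
    (hv : LinearIndependent (FixedPoints.subfield G F) v) :
    LinearIndependent F (MulAction.toFun G F ∘ v) := by
  rw [← linearIndepOn_range_iff hv.injective]
  refine linearIndepOn_of_finite _ fun t ht htfin => ?_
  lift t to Finset F using htfin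
  exact FixedPoints.linearIndependent_smul_of_linearIndependent G F
    (((linearIndepOn_range_iff hv.injective id).mpr hv).mono ht)

end Artin

section Invariant

variable {B ι : Type*} [CommRing B] [IsDomain B]

theorem Algebra.IsInvariant.exists_dvd_algebraMap_ne_zero (A G : Type*) [CommRing A]
    [Algebra A B] [Group G] [Finite G] [MulSemiringAction G B] [Algebra.IsInvariant A B G]
    {b : B} (hb : b ≠ 0) :
    ∃ a : A, algebraMap A B a ≠ 0 ∧ b ∣ algebraMap A B a := by
  have := Fintype.ofFinite G
  have hnorm : ∀ g : G, g • ∏ h : G, h • b = ∏ h : G, h • b := fun g => by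
    rw [Finset.smul_prod']
    simp_rw [smul_smul]
    exact Fintype.prod_equiv (Equiv.mulLeft g) _ _ fun _ => rfl
  obtain ⟨a, ha⟩ := Algebra.IsInvariant.isInvariant (A := A) _ hnorm
  refine ⟨a, ha ▸ Finset.prod_ne_zero_iff.mpr fun g _ => (smul_ne_zero_iff_ne g).mpr hb, ?_⟩
  simpa [ha] using Finset.dvd_prod_of_mem (fun g : G => g • b) (Finset.mem_univ 1)

variable {A G K : Type*} [CommRing A] [Algebra A B] [Group G] [Finite G] [MulSemiringAction G B]
  [Algebra.IsInvariant A B G] [SMulCommClass G A B] [Field K] [Algebra B K] [IsFractionRing B K]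
  [MulSemiringAction G K] [SMulDistribClass G B K]

variable (A) in
theorem Algebra.IsInvariant.exist_integer_multiples_fixedPoints (s : Finset ι)
    (c : ι → FixedPoints.subfield G K) :
    ∃ d : A, algebraMap A B d ≠ 0 ∧ ∀ i ∈ s, ∃ a : A,
      algebraMap B K (algebraMap A B a) = algebraMap B K (algebraMap A B d) * c i := by
  obtain ⟨⟨b, hb⟩, hbc⟩ :=
    IsLocalization.exist_integer_multiples (nonZeroDivisors B) s fun i => (c i : K)
  obtain ⟨d, hd, b', hb'⟩ := exists_dvd_algebraMap_ne_zero A G (nonZeroDivisors.ne_zero hb)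
  refine ⟨d, hd, fun i hi => ?_⟩
  obtain ⟨r, hr⟩ := hbc i hi
  have hdc : algebraMap B K (b' * r) = algebraMap B K (algebraMap A B d) * c i := by
    rw [hb', map_mul, hr, Algebra.smul_def, map_mul]; ring
  obtain ⟨a, ha⟩ := Algebra.IsInvariant.isInvariant (A := A) (G := G) (b' * r) fun g => by
    apply IsFractionRing.injective B K
    rw [algebraMap.smul', hdc, smul_mul', ← algebraMap.smul', smul_algebraMap, (c i).2 g]
  exact ⟨a, ha ▸ hdc⟩

theorem LinearIndependent.algebraMap_fixedPoints {e : ι → B} (he : LinearIndependent A e) :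
    LinearIndependent (FixedPoints.subfield G K) (algebraMap B K ∘ e) := by
  rw [linearIndependent_iff']
  intro t c hc i hi
  obtain ⟨d, hd, hdc⟩ := Algebra.IsInvariant.exist_integer_multiples_fixedPoints A t c (B := B)
  choose! a ha using hdc
  have hsum : ∑ j ∈ t, a j • e j = 0 := by
    apply IsFractionRing.injective B K
    simp only [map_sum, map_zero, Algebra.smul_def, map_mul]
    rw [Finset.sum_congr rfl fun j hj => by rw [ha j hj, mul_assoc], ← Finset.mul_sum]
    simpa [Subfield.smul_def] using congrArg (algebraMap B K (algebraMap A B d) * ·) hc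
  have hdci := ha i hi
  rw [linearIndependent_iff'.1 he t a hsum i hi, map_zero, map_zero] at hdci
  exact Subtype.ext ((mul_eq_zero.mp hdci.symm).resolve_left
    (by simpa using (IsFractionRing.injective B K).ne hd))

end Invariant

section Orbit

variable {A B G ι : Type*} [CommRing A] [CommRing B] [Algebra A B] [Group G]
  [MulSemiringAction G B] [SMulCommClass G A B]

theorem LinearIndependent.orbit [IsDomain B] [Finite G] [Algebra.IsInvariant A B G] {e : ι → B}
    (he : LinearIndependent A e) : LinearIndependent B fun i (g : G) => g • e i := by
  let := IsFractionRing.mulSemiringAction G B (FractionRing B)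
  refine LinearIndependent.of_comp ((Algebra.linearMap B (FractionRing B)).compLeft G) ?_
  convert (FixedPoints.linearIndependent_toFun_comp
    (he.algebraMap_fixedPoints (G := G) (K := FractionRing B))).restrict_scalars' B using 1
  ext i g
  exact algebraMap.smul' g (e i) _

variable (A B G) in
noncomputable def orbitTensorMap : B ⊗[A] B →ₐ[A] (G → B) :=
  AlgHom.pi fun g =>
    Algebra.TensorProduct.productMap (MulSemiringAction.toAlgHom A B g) (AlgHom.id A B)

@[simp]
theorem orbitTensorMap_tmul (x y : B) (g : G) :
    orbitTensorMap A B G (x ⊗ₜ y) g = g • x * y :=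
  rfl

theorem orbitTensorMap_injective [IsDomain B] [Finite G] [Algebra.IsInvariant A B G]
    [Module.Free A B] : Function.Injective (orbitTensorMap A B G) := by
  let e := Module.Free.chooseBasis A B
  let E := TensorProduct.equivFinsuppOfBasisLeft (N := B) e
  have h : ⇑(orbitTensorMap A B G) =
      Finsupp.linearCombination B (fun i (g : G) => g • e i) ∘ E := by
    funext x
    obtain ⟨l, rfl⟩ := E.symm.surjective x
    rw [Function.comp_apply, LinearEquiv.apply_symm_apply]
    ext g
    simp [E, Finsupp.linearCombination_apply, Finsupp.sum, Finset.sum_apply, mul_comm]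
  rw [h]
  exact Function.Injective.comp e.linearIndependent.orbit E.injective

end Orbit

section AlgEquivAction

variable {k R W : Type} [CommSemiring k] [CommSemiring R] [Algebra k R] [Group W]
  (σ : W →* (R ≃ₐ[k] R))

theorem invariantsSubalgebra_isInvariant :
    letI := MulSemiringAction.compHom R σ
    Algebra.IsInvariant (invariantsSubalgebra σ) R W :=
  letI := MulSemiringAction.compHom R σ
  ⟨fun r hr => ⟨⟨r, hr⟩, rfl⟩⟩

theorem invariantsSubalgebra_smulCommClass :
    letI := MulSemiringAction.compHom R σ
    SMulCommClass W (invariantsSubalgebra σ) R :=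
  letI := MulSemiringAction.compHom R σ
  ⟨fun w a r => show σ w (a * r) = a * σ w r by rw [map_mul, a.2 w]⟩

end AlgEquivAction

/-- The kernel of `μ` is the ideal of the union of the graphs `Γ_w`; `hfree` is the
Pittie–Steinberg freeness of `R` over `R^W`, which is where adjointness of `G` enters. -/
theorem stmt4_general {k Λ W : Type} [Field k] [AddCommGroup Λ] [Module.Free ℤ Λ]
    [Group W] [Finite W]
    (σ : W →* (AddMonoidAlgebra k Λ ≃ₐ[k] AddMonoidAlgebra k Λ))
    (hfree : Module.Free (invariantsSubalgebra σ) (AddMonoidAlgebra k Λ)) :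
    IsReduced (AddMonoidAlgebra k Λ ⊗[(invariantsSubalgebra σ)] AddMonoidAlgebra k Λ) ∧
    ∀ (π : (AddMonoidAlgebra k Λ ⊗[k] AddMonoidAlgebra k Λ) →+*
        (AddMonoidAlgebra k Λ ⊗[(invariantsSubalgebra σ)] AddMonoidAlgebra k Λ))
      (μ : (AddMonoidAlgebra k Λ ⊗[k] AddMonoidAlgebra k Λ) →+* (W → AddMonoidAlgebra k Λ)),
      (∀ f g : AddMonoidAlgebra k Λ,
        π (f ⊗ₜ[k] g) = f ⊗ₜ[(invariantsSubalgebra σ)] g) →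
      (∀ f g : AddMonoidAlgebra k Λ, μ (f ⊗ₜ[k] g) = fun w => σ w f * g) →
      {x | π x = 0} = {x | μ x = 0} := by
  -- makes `k[Λ]` a domain
  have : UniqueSums Λ :=
    (Module.Free.chooseBasis ℤ Λ).repr.toAddEquiv.uniqueSums_iff.mpr inferInstance
  let := MulSemiringAction.compHom (AddMonoidAlgebra k Λ) σ
  have := invariantsSubalgebra_isInvariant σ
  have := invariantsSubalgebra_smulCommClass σ
  have hinj := orbitTensorMap_injective (A := invariantsSubalgebra σ)
    (B := AddMonoidAlgebra k Λ) (G := W)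
  refine ⟨isReduced_of_injective _ hinj, fun π μ hπ hμ => ?_⟩
  have hμπ : ∀ x, μ x = orbitTensorMap _ _ W (π x) := fun x => by
    induction x using TensorProduct.induction_on with
    | zero => simp
    | tmul f g => rw [hπ, hμ]; rfl
    | add x y hx hy => simp [hx, hy]
  ext x
  simp only [Set.mem_ofPred_eq, hμπ, map_eq_zero_iff _ hinj]

/-- `Ť ×_{Ť//W} Ť = Spec (R ⊗_{R^W} R)` is reduced, and it equals the union
of the graphs `Γ_w` of the Weyl group elements with the reduced induced structure:
the kernel of `R ⊗_k R → R ⊗_{R^W} R` equals the kernel of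
`R ⊗_k R → ∏_W R`, `f ⊗ g ↦ ((w·f)·g)_w` (the ideal of the union of graphs).
Freeness of `R` over `R^W` (Pittie–Steinberg) encodes that `G` is adjoint. -/
theorem stmt4 {k Λ W : Type} [Field k] [AddCommGroup Λ] [Module.Free ℤ Λ] [Module.Finite ℤ Λ]
    [Group W] [Finite W]
    (ρ : W →* Multiplicative (AddAut Λ))
    (σ : W →* (AddMonoidAlgebra k Λ ≃ₐ[k] AddMonoidAlgebra k Λ))
    (hσρ : ∀ (w : W) (l : Λ),
      σ w (AddMonoidAlgebra.single l (1 : k)) = AddMonoidAlgebra.single (Multiplicative.toAdd (ρ w) l) (1 : k))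
    (hfree : Module.Free (invariantsSubalgebra σ) (AddMonoidAlgebra k Λ)) :
    IsReduced (AddMonoidAlgebra k Λ ⊗[(invariantsSubalgebra σ)] AddMonoidAlgebra k Λ) ∧
    ∀ (π : (AddMonoidAlgebra k Λ ⊗[k] AddMonoidAlgebra k Λ) →+*
        (AddMonoidAlgebra k Λ ⊗[(invariantsSubalgebra σ)] AddMonoidAlgebra k Λ))
      (μ : (AddMonoidAlgebra k Λ ⊗[k] AddMonoidAlgebra k Λ) →+* (W → AddMonoidAlgebra k Λ)),
      (∀ f g : AddMonoidAlgebra k Λ,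
        π (f ⊗ₜ[k] g) = f ⊗ₜ[(invariantsSubalgebra σ)] g) →
      (∀ f g : AddMonoidAlgebra k Λ, μ (f ⊗ₜ[k] g) = fun w => σ w f * g) →
      {x | π x = 0} = {x | μ x = 0} :=
  stmt4_general σ hfree
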